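/- Define the symmetrized 3D MIPS distortion on the positive orthant of ℝ³ by f^Sym(σ₁,σ₂,σ₃) = (1/16)·(1 + σ₁σ₂σ₃)·∏ᵢ₌₁³ (σᵢ/σᵢ₊₁ + σᵢ₊₁/σᵢ), with indices taken cyclically (σ₄ = σ₁). Then: (i) f^Sym(σ) > 1/2 for every σ in the positive orthant; (ii) for every t > 0, f^Sym(t,t,t) = (1/2)·(1 + t³), so the infimum of f^Sym over the positive orthant equals 1/2 and is not attained; (iii) f^Sym(1,1,1) = 1, and in particular (1,1,1) is not a minimizer, so the symmetrized MIPS energy does not favor isometry. -/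

import Mathlib

/-!
Each cyclic factor `σᵢ/σᵢ₊₁ + σᵢ₊₁/σᵢ` is at least `2` by AM–GM, so
`f^Sym(σ) ≥ (1 + σ₁σ₂σ₃)/2 > 1/2`, with equality in all three AM–GM steps exactly on the
diagonal, where `f^Sym(t,t,t) = (1 + t³)/2`. Letting `t → 0⁺` shows that `1/2` is the infimum;
already `t = 1/2` beats the isometry `(1,1,1)`.
-/

/-- The symmetrized 3D MIPS distortion in singular values (cyclic indices). -/
noncomputable def fSymMIPS (a b c : ℝ) : ℝ :=
  (1/16) * (1 + a * b * c) *
    ((a / b + b / a) * (b / c + c / b) * (c / a + a / c))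

open Filter Topology

lemma two_le_div_add_div {x y : ℝ} (hx : 0 < x) (hy : 0 < y) : 2 ≤ x / y + y / x := by
  rw [div_add_div _ _ hy.ne' hx.ne', le_div_iff₀ (by positivity)]
  nlinarith [sq_nonneg (x - y)]

lemma half_mul_one_add_mul_le_fSymMIPS {a b c : ℝ} (ha : 0 < a) (hb : 0 < b) (hc : 0 < c) :
    1/2 * (1 + a * b * c) ≤ fSymMIPS a b c := by
  have hprod : 8 ≤ (a / b + b / a) * (b / c + c / b) * (c / a + a / c) := by
    have h₁ := two_le_div_add_div ha hb
    have h₂ := two_le_div_add_div hb hc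
    have h₃ := two_le_div_add_div hc ha
    calc (8 : ℝ) = 2 * 2 * 2 := by norm_num
      _ ≤ _ := by gcongr
  have habc : 0 < 1 + a * b * c := by positivity
  unfold fSymMIPS
  nlinarith

lemma half_lt_fSymMIPS {a b c : ℝ} (ha : 0 < a) (hb : 0 < b) (hc : 0 < c) :
    1/2 < fSymMIPS a b c := by
  have habc : 0 < a * b * c := by positivity
  linarith [half_mul_one_add_mul_le_fSymMIPS ha hb hc]

lemma fSymMIPS_self {t : ℝ} (ht : 0 < t) : fSymMIPS t t t = 1/2 * (1 + t ^ 3) := by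
  unfold fSymMIPS
  field_simp
  ring

lemma isGLB_fSymMIPS_image :
    IsGLB {x : ℝ | ∃ a b c : ℝ, 0 < a ∧ 0 < b ∧ 0 < c ∧ x = fSymMIPS a b c} (1/2) := by
  refine isGLB_of_mem_closure ?_ ?_
  · rintro x ⟨a, b, c, ha, hb, hc, rfl⟩
    exact (half_lt_fSymMIPS ha hb hc).le
  · have hlim : Tendsto (fun t : ℝ => 1/2 * (1 + t ^ 3)) (𝓝[>] 0) (𝓝 (1/2)) := by
      refine tendsto_nhdsWithin_of_tendsto_nhds ?_
      convert (by fun_prop : Continuous fun t : ℝ => 1/2 * (1 + t ^ 3)).tendsto 0 using 2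
      norm_num
    refine mem_closure_of_tendsto hlim ?_
    filter_upwards [self_mem_nhdsWithin] with t (ht : 0 < t)
    exact ⟨t, t, t, ht, ht, ht, (fSymMIPS_self ht).symm⟩

theorem statement_10 :
    (∀ a b c : ℝ, 0 < a → 0 < b → 0 < c → 1/2 < fSymMIPS a b c) ∧
    (∀ t : ℝ, 0 < t → fSymMIPS t t t = (1/2) * (1 + t^3)) ∧
    IsGLB {x : ℝ | ∃ a b c : ℝ, 0 < a ∧ 0 < b ∧ 0 < c ∧ x = fSymMIPS a b c} (1/2) ∧
    (1/2 : ℝ) ∉ {x : ℝ | ∃ a b c : ℝ, 0 < a ∧ 0 < b ∧ 0 < c ∧ x = fSymMIPS a b c} ∧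
    fSymMIPS 1 1 1 = 1 ∧
    (∃ a b c : ℝ, 0 < a ∧ 0 < b ∧ 0 < c ∧ fSymMIPS a b c < fSymMIPS 1 1 1) := by
  have hone : fSymMIPS 1 1 1 = 1 := by norm_num [fSymMIPS_self]
  refine ⟨fun a b c ↦ half_lt_fSymMIPS, fun t ↦ fSymMIPS_self, isGLB_fSymMIPS_image, ?_, hone, ?_⟩
  · rintro ⟨a, b, c, ha, hb, hc, h⟩
    exact (half_lt_fSymMIPS ha hb hc).ne h
  · refine ⟨1/2, 1/2, 1/2, by norm_num, by norm_num, by norm_num, ?_⟩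
    rw [hone, fSymMIPS_self (by norm_num)]
    norm_num
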